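/- arXiv:2004.01587 — 5 statements merged into one kernel-verified Lean document; each statement's English description precedes it below -/
import Mathlib

section
/- Let (X,d) be a compact, totally disconnected metric space with at least two points. If X is c-uniformly perfect for some c>1 and (η,r₀)-quasi-self-similar for some distortion homeomorphism η and some r₀>0, then X is uniformly disconnected, i.e. there exists C≥1 such that X is C-uniformly disconnected. -/
/-!
Fix a scale `r` and a quasi-self-similar chart `φ : B(x, r) → X`, whose image contains the ball of
the fixed radius `s = min r₀ (diam X / 2)` around `φ x`. Compactness and total disconnectedness give
one `δ > 0` such that every point lies in a set `F` of diameter at most `ε` which is `δ`-separated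
from its complement; pull back the one containing `φ x` to `E = B(x, r) ∩ φ⁻¹ F`. Uniform
perfectness provides `b` with `d(φ x, φ b)` comparable to `s` and `d(x, b)` comparable to `r`.
Quasisymmetry then confines `E` to a ball of radius comparable to `r` around `x`, and turns the
`δ`-gap around `F` into a gap comparable to `r` around `E`. None of the constants depends on
`x` or `r`.
-/

open Metric Set

/-- A distortion function: an increasing self-homeomorphism of `[0,∞)`
(an increasing bijection of `[0,∞)` onto itself, which is automatically a homeomorphism). -/
structure IsDistortion (η : ℝ → ℝ) : Prop where
  bijOn : Set.BijOn η (Set.Ici 0) (Set.Ici 0)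
  strictMonoOn : StrictMonoOn η (Set.Ici 0)

/-- `f` is an `η`-quasisymmetric embedding on the set `S`:
`f` is injective on `S` and `d(f x, f a) / d(f x, f b) ≤ η (d(x,a) / d(x,b))`
for all `x, a, b ∈ S` with `x ≠ b`. -/
def IsQSOn {α β : Type*} [PseudoMetricSpace α] [PseudoMetricSpace β]
    (η : ℝ → ℝ) (f : α → β) (S : Set α) : Prop :=
  Set.InjOn f S ∧ ∀ x ∈ S, ∀ a ∈ S, ∀ b ∈ S, x ≠ b →
    dist (f x) (f a) ≤ η (dist x a / dist x b) * dist (f x) (f b)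

/-- The metric space `X` is `c`-uniformly perfect: for every `x ∈ X` and every
`r ∈ (0, diam X)`, the set `B(x,r) \ B(x, r/c)` is nonempty. -/
def UniformlyPerfect (X : Type*) [MetricSpace X] (c : ℝ) : Prop :=
  ∀ x : X, ∀ r : ℝ, 0 < r → r < Metric.diam (Set.univ : Set X) →
    ∃ y : X, dist y x < r ∧ r / c ≤ dist y x

/-- The metric space `X` is `C`-uniformly disconnected: for every `x ∈ X` and every
`r ∈ (0, diam X)` there is a set `E ∋ x` with `diam E ≤ r` and `dist(E, X \ E) ≥ r / C`. -/
def UniformlyDisconnected (X : Type*) [MetricSpace X] (C : ℝ) : Prop :=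
  ∀ x : X, ∀ r : ℝ, 0 < r → r < Metric.diam (Set.univ : Set X) →
    ∃ E : Set X, x ∈ E ∧ Metric.diam E ≤ r ∧
      ∀ a ∈ E, ∀ b ∉ E, r / C ≤ dist a b

/-- The metric space `X` is `(η, r₀)`-quasi-self-similar: for every `x ∈ X` and every
`r ∈ (0, diam X)` there is an `η`-quasisymmetric embedding `φ : B(x,r) → X` with
`B(φ x, r₀) ⊆ φ (B(x,r))`. -/
def QuasiSelfSimilar (X : Type*) [MetricSpace X] (η : ℝ → ℝ) (r₀ : ℝ) : Prop :=
  ∀ x : X, ∀ r : ℝ, 0 < r → r < Metric.diam (Set.univ : Set X) →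
    ∃ φ : X → X, IsQSOn η φ (Metric.ball x r) ∧
      Metric.ball (φ x) r₀ ⊆ φ '' Metric.ball x r

namespace IsDistortion

variable {η : ℝ → ℝ}

lemma nonneg (hη : IsDistortion η) {t : ℝ} (ht : 0 ≤ t) : 0 ≤ η t :=
  hη.bijOn.mapsTo ht

lemma map_zero (hη : IsDistortion η) : η 0 = 0 := by
  obtain ⟨t, ht, hηt⟩ := hη.bijOn.surjOn (self_mem_Ici (a := (0 : ℝ)))
  obtain rfl | ht0 := (show (0 : ℝ) ≤ t from ht).eq_or_lt
  · exact hηt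
  · linarith [hη.strictMonoOn self_mem_Ici ht ht0, hη.nonneg le_rfl]

lemma exists_pos_map_le (hη : IsDistortion η) {s : ℝ} (hs : 0 < s) :
    ∃ κ, 0 < κ ∧ η κ ≤ s := by
  obtain ⟨κ, hκ, hηκ⟩ := hη.bijOn.surjOn (show s ∈ Ici 0 from hs.le)
  refine ⟨κ, (show (0 : ℝ) ≤ κ from hκ).lt_of_ne ?_, hηκ.le⟩
  rintro rfl
  rw [hη.map_zero] at hηκ
  exact hs.ne hηκ

end IsDistortion

namespace IsQSOn

variable {X Y : Type*} [MetricSpace X] [MetricSpace Y] {η : ℝ → ℝ} {f : X → Y} {S : Set X}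
  {x a b : X}

lemma dist_le_map_mul_of_dist_le (hη : IsDistortion η) (hf : IsQSOn η f S) (hx : x ∈ S)
    (ha : a ∈ S) (hb : b ∈ S) (hxb : x ≠ b) {T : ℝ} (h : dist x a ≤ T * dist x b) :
    dist (f x) (f a) ≤ η T * dist (f x) (f b) := by
  have hq : dist x a / dist x b ≤ T := (div_le_iff₀ (dist_pos.2 hxb)).2 h
  have hq0 : 0 ≤ dist x a / dist x b := by positivity
  calc dist (f x) (f a) ≤ η (dist x a / dist x b) * dist (f x) (f b) := hf.2 x hx a ha b hb hxb
    _ ≤ η T * dist (f x) (f b) := by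
      gcongr
      exact hη.strictMonoOn.monotoneOn hq0 (hq0.trans hq) hq

lemma mul_dist_le_of_map_mul_le (hη : IsDistortion η) (hf : IsQSOn η f S) (hx : x ∈ S)
    (ha : a ∈ S) (hb : b ∈ S) {κ : ℝ} (hκ : 0 ≤ κ)
    (h : η κ * dist (f x) (f b) ≤ dist (f x) (f a)) : κ * dist x b ≤ dist x a := by
  obtain rfl | hxb := eq_or_ne x b
  · simp
  have hfxb : 0 < dist (f x) (f b) := dist_pos.2 (hf.1.ne hx hb hxb)
  have hηq : η κ ≤ η (dist x a / dist x b) :=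
    le_of_mul_le_mul_right (h.trans (hf.2 x hx a ha b hb hxb)) hfxb
  rwa [hη.strictMonoOn.le_iff_le hκ (by simp only [mem_Ici]; positivity),
    le_div_iff₀ (dist_pos.2 hxb)] at hηq

end IsQSOn

section QuasiSymmetricChart

variable {X : Type*} [MetricSpace X] {η : ℝ → ℝ} {φ : X → X} {x b : X} {ρ ε : ℝ} {F : Set X}

lemma IsQSOn.dist_le_of_mem_preimage (hη : IsDistortion η) (hφ : IsQSOn η φ (ball x ρ))
    (hb : b ∈ ball x ρ) (hF : F ⊆ closedBall (φ x) ε) {T : ℝ} (hT : 0 < T)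
    (hTε : η T * ε < dist (φ x) (φ b)) {a : X} (ha : a ∈ ball x ρ) (haF : φ a ∈ F) :
    dist x a ≤ ρ / T := by
  by_contra! hfar
  have hρ : 0 < ρ := dist_nonneg.trans_lt (mem_ball.1 ha)
  have hxa : x ≠ a := by
    rintro rfl
    exact (dist_self x ▸ hfar).not_ge (by positivity)
  have hba : dist x b ≤ T * dist x a := by
    rw [div_lt_iff₀ hT] at hfar
    linarith [mem_ball'.1 hb]
  have himg := hφ.dist_le_map_mul_of_dist_le hη (mem_ball_self hρ) hb ha hxa hba
  have hε : dist (φ x) (φ a) ≤ ε := by simpa [dist_comm] using hF haF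
  nlinarith [hη.nonneg hT.le]

lemma IsQSOn.min_le_dist_of_notMem_ball_inter_preimage (hη : IsDistortion η)
    (hφ : IsQSOn η φ (ball x ρ)) (hb : b ∈ ball x ρ) (hF : F ⊆ closedBall (φ x) ε) {δ : ℝ}
    (hFsep : ∀ u ∈ F, ∀ v ∉ F, δ ≤ dist u v) {κ : ℝ} (hκ : 0 ≤ κ)
    (hκδ : η κ * (ε + dist (φ x) (φ b)) ≤ δ) {a y : X} (ha : a ∈ ball x ρ) (haF : φ a ∈ F)
    (hy : y ∉ ball x ρ ∩ φ ⁻¹' F) : min (κ * dist a b) (ρ - dist x a) ≤ dist a y := by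
  by_cases hyB : y ∈ ball x ρ
  · refine min_le_of_left_le (hφ.mul_dist_le_of_map_mul_le hη ha hyB hb hκ ?_)
    have hab : dist (φ a) (φ b) ≤ ε + dist (φ x) (φ b) := by
      have := hF haF
      rw [mem_closedBall] at this
      linarith [dist_triangle (φ a) (φ x) (φ b)]
    calc η κ * dist (φ a) (φ b) ≤ η κ * (ε + dist (φ x) (φ b)) :=
          mul_le_mul_of_nonneg_left hab (hη.nonneg hκ)
      _ ≤ δ := hκδ
      _ ≤ dist (φ a) (φ y) := hFsep _ haF _ fun hyF => hy ⟨hyB, hyF⟩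
  · refine min_le_of_right_le ?_
    linarith [not_lt.1 (mem_ball'.not.1 hyB), dist_triangle x a y]

lemma IsQSOn.exists_separated_nbhd (hη : IsDistortion η) (hφ : IsQSOn η φ (ball x ρ))
    (hb : b ∈ ball x ρ) {μ : ℝ} (hμ : 0 < μ) (hμ1 : μ ≤ 1) (hxb : μ * ρ ≤ dist x b)
    (hxF : φ x ∈ F) (hF : F ⊆ closedBall (φ x) ε) {δ : ℝ}
    (hFsep : ∀ u ∈ F, ∀ v ∉ F, δ ≤ dist u v) (hεb : η (2 / μ) * ε < dist (φ x) (φ b))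
    {κ : ℝ} (hκ : 0 < κ) (hκδ : η κ * (ε + dist (φ x) (φ b)) ≤ δ) :
    ∃ E, x ∈ E ∧ diam E ≤ ρ ∧ ∀ a ∈ E, ∀ y ∉ E, ρ / max 2 (2 / (κ * μ)) ≤ dist a y := by
  have hρ : 0 < ρ := dist_nonneg.trans_lt (mem_ball.1 hb)
  have hE : ∀ a ∈ ball x ρ ∩ φ ⁻¹' F, dist x a ≤ μ * ρ / 2 := fun a ha =>
    (hφ.dist_le_of_mem_preimage hη hb hF (by positivity) hεb ha.1 ha.2).trans_eq (by field_simp)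
  refine ⟨ball x ρ ∩ φ ⁻¹' F, ⟨mem_ball_self hρ, hxF⟩, ?_, fun a ha y hy => ?_⟩
  · calc diam (ball x ρ ∩ φ ⁻¹' F) ≤ 2 * (μ * ρ / 2) :=
          diam_le_of_subset_closedBall (by positivity) fun a ha => mem_closedBall'.2 (hE a ha)
      _ ≤ ρ := by nlinarith
  have hsep := hφ.min_le_dist_of_notMem_ball_inter_preimage hη hb hF hFsep hκ.le hκδ ha.1 ha.2 hy
  have hxa := hE a ha
  have hab : μ * ρ / 2 ≤ dist a b := by linarith [dist_triangle x a b]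
  refine le_trans (le_min ?_ ?_) hsep
  · calc ρ / max 2 (2 / (κ * μ)) ≤ ρ / (2 / (κ * μ)) :=
          div_le_div_of_nonneg_left hρ.le (by positivity) (le_max_right _ _)
      _ = κ * (μ * ρ / 2) := by field_simp
      _ ≤ κ * dist a b := mul_le_mul_of_nonneg_left hab hκ.le
  · calc ρ / max 2 (2 / (κ * μ)) ≤ ρ / 2 :=
          div_le_div_of_nonneg_left hρ.le two_pos (le_max_left _ _)
      _ ≤ ρ - dist x a := by nlinarith

end QuasiSymmetricChart

theorem exists_pos_forall_exists_separated_subset_ball {X : Type*} [MetricSpace X]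
    [CompactSpace X] [TotallyDisconnectedSpace X] {ε : ℝ} (hε : 0 < ε) :
    ∃ δ, 0 < δ ∧ ∀ y : X, ∃ F : Set X, y ∈ F ∧ F ⊆ ball y ε ∧
      ∀ u ∈ F, ∀ v ∉ F, δ ≤ dist u v := by
  obtain ⟨n, D, -, hDsmall, hDcover, hDdisj⟩ :=
    (ContinuousMap.id X).exists_disjoint_nonempty_clopen_cover_of_mem_nhds_diagonal
      (nhdsSet_diagonal_eq_uniformity (α := X) ▸ dist_mem_uniformity hε)
  -- Being in a common cell is an open relation containing the diagonal, hence an entourage.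
  have hcell : (⋃ i, (D i : Set X) ×ˢ (D i : Set X)) ∈ uniformity X := by
    rw [← nhdsSet_diagonal_eq_uniformity, (isOpen_iUnion fun i =>
      (D i).isOpen.prod (D i).isOpen).mem_nhdsSet]
    rintro ⟨y, _⟩ (rfl : y = _)
    obtain ⟨i, hi⟩ := mem_iUnion.1 (hDcover (mem_univ y))
    exact mem_iUnion.2 ⟨i, hi, hi⟩
  obtain ⟨δ, hδ, hδcell⟩ := mem_uniformity_dist.1 hcell
  refine ⟨δ, hδ, fun y => ?_⟩
  obtain ⟨i, hi⟩ := mem_iUnion.1 (hDcover (mem_univ y))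
  refine ⟨D i, hi, fun u hu => hDsmall i u hu y hi, fun u hu v hv => not_lt.1 fun huv => hv ?_⟩
  obtain ⟨j, hju, hjv⟩ := mem_iUnion.1 (hδcell huv)
  obtain rfl : i = j := hDdisj.eq <| by
    rw [Function.onFun, ← TopologicalSpace.Clopens.coe_disjoint, Set.not_disjoint_iff]
    exact ⟨u, hu, hju⟩
  exact hjv

lemma UniformlyPerfect.exists_mem_ball_far_of_isQSOn {X : Type*} [MetricSpace X]
    [BoundedSpace X] {c : ℝ} (hup : UniformlyPerfect X c) {η : ℝ → ℝ} (hη : IsDistortion η)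
    {s : ℝ} (hs : 0 < s) (hsD : s < diam (univ : Set X)) {κ : ℝ} (hκ : 0 ≤ κ)
    (hκs : η κ * diam (univ : Set X) ≤ s / c) {x : X} {ρ : ℝ} (hρ : 0 < ρ)
    (hρD : ρ < diam (univ : Set X)) {φ : X → X} (hφ : IsQSOn η φ (ball x ρ))
    (himg : ball (φ x) s ⊆ φ '' ball x ρ) :
    ∃ b ∈ ball x ρ, s / c ≤ dist (φ x) (φ b) ∧ dist (φ x) (φ b) < s ∧
      κ / c * ρ ≤ dist x b := by
  obtain ⟨y, hys, hyc⟩ := hup (φ x) s hs hsD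
  obtain ⟨b, hb, rfl⟩ := himg (mem_ball.2 hys)
  rw [dist_comm] at hys hyc
  obtain ⟨w, hwρ, hwc⟩ := hup x ρ hρ hρD
  rw [dist_comm] at hwc
  refine ⟨b, hb, hyc, hys, ?_⟩
  have hφw : dist (φ x) (φ w) ≤ diam (univ : Set X) :=
    dist_le_diam_of_mem BoundedSpace.bounded_univ (mem_univ _) (mem_univ _)
  have hκw : κ * dist x w ≤ dist x b := by
    refine hφ.mul_dist_le_of_map_mul_le hη (mem_ball_self hρ) hb (mem_ball.2 hwρ) hκ ?_
    calc η κ * dist (φ x) (φ w) ≤ η κ * diam (univ : Set X) :=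
          mul_le_mul_of_nonneg_left hφw (hη.nonneg hκ)
      _ ≤ dist (φ x) (φ b) := hκs.trans hyc
  calc κ / c * ρ = κ * (ρ / c) := by ring
    _ ≤ κ * dist x w := mul_le_mul_of_nonneg_left hwc hκ
    _ ≤ dist x b := hκw

/-- If a compact, totally disconnected metric space with at least two points is
`c`-uniformly perfect (`c > 1`) and `(η, r₀)`-quasi-self-similar, then it is uniformly
disconnected. -/
theorem uniformlyDisconnected_of_quasiSelfSimilar
    (X : Type*) [MetricSpace X] [CompactSpace X] [TotallyDisconnectedSpace X] [Nontrivial X]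
    (c : ℝ) (hc : 1 < c) (hup : UniformlyPerfect X c)
    (η : ℝ → ℝ) (hη : IsDistortion η) (r₀ : ℝ) (hr₀ : 0 < r₀)
    (hqss : QuasiSelfSimilar X η r₀) :
    ∃ C : ℝ, 1 ≤ C ∧ UniformlyDisconnected X C := by
  have hc0 : 0 < c := one_pos.trans hc
  set D := diam (univ : Set X)
  have hD : 0 < D := diam_pos nontrivial_univ BoundedSpace.bounded_univ
  set s := min r₀ (D / 2)
  have hs : 0 < s := lt_min hr₀ (half_pos hD)
  obtain ⟨κ₁, hκ₁, hηκ₁⟩ := hη.exists_pos_map_le (div_pos (div_pos hs hc0) hD)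
  set μ := min (κ₁ / c) 1
  have hμ : 0 < μ := lt_min (div_pos hκ₁ hc0) one_pos
  have hημ : 0 ≤ η (2 / μ) := hη.nonneg (by positivity)
  set ε := s / c / (η (2 / μ) + 1)
  have hηε : η (2 / μ) * ε < s / c := by
    rw [mul_div_assoc', div_lt_iff₀ (by linarith)]
    linarith [div_pos hs hc0]
  obtain ⟨δ, hδ, hcells⟩ := exists_pos_forall_exists_separated_subset_ball (X := X)
    (show 0 < ε by positivity)
  obtain ⟨κ₂, hκ₂, hηκ₂⟩ := hη.exists_pos_map_le (div_pos hδ (by positivity : 0 < ε + s))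
  refine ⟨max 2 (2 / (κ₂ * μ)), by linarith [le_max_left 2 (2 / (κ₂ * μ))], fun x r hr hrD => ?_⟩
  obtain ⟨φ, hφ, himg⟩ := hqss x r hr hrD
  obtain ⟨b, hb, hφb, hφbs, hxb⟩ := hup.exists_mem_ball_far_of_isQSOn hη hs
    ((min_le_right _ _).trans_lt (half_lt_self hD)) hκ₁.le ((le_div_iff₀ hD).1 hηκ₁) hr hrD hφ
    ((ball_subset_ball (min_le_left _ _)).trans himg)
  obtain ⟨F, hxF, hFball, hFsep⟩ := hcells (φ x)
  refine hφ.exists_separated_nbhd hη hb hμ (min_le_right _ _)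
    ((mul_le_mul_of_nonneg_right (min_le_left _ _) hr.le).trans hxb) hxF
    (hFball.trans ball_subset_closedBall) hFsep (hηε.trans_le hφb) hκ₂ ?_
  calc η κ₂ * (ε + dist (φ x) (φ b)) ≤ η κ₂ * (ε + s) :=
        mul_le_mul_of_nonneg_left (by linarith) (hη.nonneg hκ₂.le)
    _ ≤ δ := (le_div_iff₀ (by positivity)).1 hηκ₂
end

section
/- For every ε with 0 < ε < 1/2, the attractor X_ε ⊂ ℝ of the iterated function system {φ₁,φ₂} on ℝ given by φᵢ(x) = (1−ε)x/2 + (i−1)(1+ε)/2, i=1,2, is 4-uniformly perfect. -/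
open Metric Set

/-- The maps `φᵢ(x) = (1-ε)x/2 + (i-1)(1+ε)/2`, `i = 1, 2` (indexed here by `i : Fin 2`,
so `i = 0, 1` corresponds to `i = 1, 2`). -/
noncomputable def phi (ε : ℝ) (i : Fin 2) (x : ℝ) : ℝ :=
  (1 - ε) * x / 2 + (i : ℕ) * (1 + ε) / 2

/-- The set `X` is `c`-uniformly perfect: for every `x ∈ X` and every `r ∈ (0, diam X)`,
the set `B(x,r) \ B(x, r/c)` (taken within `X`) is nonempty. -/
def UniformlyPerfectOn {α : Type*} [PseudoMetricSpace α] (c : ℝ) (X : Set α) : Prop :=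
  ∀ x ∈ X, ∀ r : ℝ, 0 < r → r < Metric.diam X →
    ∃ y ∈ X, dist y x < r ∧ r / c ≤ dist y x

/-!
Write `s = (1 - ε) / 2`, so that `φᵢ` is a similarity of ratio `s` and `X ⊆ [0, 1]` contains
`0, s, 1 - s, 1`. Applying `φᵢ` carries a point of `X` at distance in `[r/4, r)` from `x` to one
at distance in `[sr/4, sr)` from `φᵢ x`, so only the scales `r ∈ (s, 1]` need checking. At those
scales one of the four points `0, s, 1 - s, 1` will do, because `x` (or `1 - x`, which reflects
the four points onto themselves) lies in `[0, s²] ∪ [s(1 - s), s]`.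
-/

open Filter Topology

def UniformlyPerfectAtScale {α : Type*} [PseudoMetricSpace α] (c : ℝ) (X : Set α) (r : ℝ) :
    Prop :=
  ∀ x ∈ X, ∃ y ∈ X, dist y x < r ∧ r / c ≤ dist y x

theorem UniformlyPerfectAtScale.mul_of_similarities {α ι : Type*} [PseudoMetricSpace α]
    {c r s : ℝ} {X : Set α} {f : ι → α → α} (hs : 0 < s)
    (hdist : ∀ i x y, dist (f i x) (f i y) = s * dist x y) (hmaps : ∀ i, MapsTo (f i) X X)
    (hcover : X ⊆ ⋃ i, f i '' X) (h : UniformlyPerfectAtScale c X r) :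
    UniformlyPerfectAtScale c X (s * r) := by
  intro x hx
  obtain ⟨i, w, hw, rfl⟩ := mem_iUnion.1 (hcover hx)
  obtain ⟨y, hy, hlt, hle⟩ := h w hw
  refine ⟨f i y, hmaps i hy, ?_, ?_⟩
  · rw [hdist]
    exact mul_lt_mul_of_pos_left hlt hs
  · rw [hdist, mul_div_assoc]
    exact mul_le_mul_of_nonneg_left hle hs.le

theorem forall_mem_Ioc_zero_one_of_mul {s : ℝ} {P : ℝ → Prop} (hs0 : 0 < s) (hs1 : s < 1)
    (hbase : ∀ t ∈ Ioc s 1, P t) (hmul : ∀ t, P t → P (s * t)) : ∀ t ∈ Ioc 0 1, P t := by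
  suffices ∀ n : ℕ, ∀ t, s ^ (n + 1) < t → t ≤ s ^ n → P t by
    rintro t ⟨ht0, ht1⟩
    obtain ⟨n, hn⟩ := exists_nat_pow_near_of_lt_one ht0 ht1 hs0 hs1
    exact this n t hn.1 hn.2
  intro n
  induction n with
  | zero =>
    intro t h1 h2
    exact hbase t ⟨by simpa using h1, by simpa using h2⟩
  | succ n ih =>
    intro t h1 h2
    rw [pow_succ] at h1 h2
    have := hmul _ (ih (t / s) ((lt_div_iff₀ hs0).2 h1) ((div_le_iff₀ hs0).2 h2))
    rwa [mul_div_cancel₀ _ hs0.ne'] at this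

theorem mem_of_mapsTo_affine {S : Set ℝ} {a p : ℝ} (hS : IsClosed S) (hne : S.Nonempty)
    (ha : |a| < 1) (hmaps : MapsTo (fun x => a * x + (1 - a) * p) S S) : p ∈ S := by
  obtain ⟨x, hx⟩ := hne
  have hiter (n : ℕ) : (fun x => a * x + (1 - a) * p)^[n] x = p + a ^ n * (x - p) := by
    induction n with
    | zero => simp
    | succ n ih => rw [Function.iterate_succ_apply', ih]; ring
  have hlim : Tendsto (fun n : ℕ => p + a ^ n * (x - p)) atTop (𝓝 p) := by
    simpa using ((tendsto_pow_atTop_nhds_zero_of_abs_lt_one ha).mul_const (x - p)).const_add p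
  exact hS.mem_of_tendsto hlim (Eventually.of_forall fun n => hiter n ▸ hmaps.iterate n hx)

def levelOneEndpoints (ε : ℝ) : Set ℝ := {0, (1 - ε) / 2, (1 + ε) / 2, 1}

theorem one_sub_mem_levelOneEndpoints {ε d : ℝ} (hd : d ∈ levelOneEndpoints ε) :
    1 - d ∈ levelOneEndpoints ε := by
  simp only [levelOneEndpoints, mem_insert_iff, mem_singleton_iff] at hd ⊢
  rcases hd with rfl | rfl | rfl | rfl
  · exact .inr <| .inr <| .inr <| by ring
  · exact .inr <| .inr <| .inl <| by ring
  · exact .inr <| .inl <| by ring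
  · exact .inl <| by ring

theorem exists_mem_levelOneEndpoints_dist_lt_le {ε ξ t : ℝ} (hε₀ : 0 ≤ ε) (hε₁ : ε ≤ 1 / 2)
    (hξ0 : 0 ≤ ξ) (hξs : ξ ≤ (1 - ε) / 2)
    (hgap : ξ ≤ ((1 - ε) / 2) ^ 2 ∨ (1 - ε) / 2 * ((1 + ε) / 2) ≤ ξ)
    (ht : (1 - ε) / 2 < t) (ht1 : t ≤ 1) :
    ∃ d ∈ levelOneEndpoints ε, dist d ξ < t ∧ t / 4 ≤ dist d ξ := by
  simp only [levelOneEndpoints, mem_insert_iff, mem_singleton_iff, exists_eq_or_imp,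
    exists_eq_left, Real.dist_eq, zero_sub, abs_neg, abs_of_nonneg hξ0,
    abs_of_nonneg (sub_nonneg.2 hξs)]
  rw [abs_of_nonneg (by linarith : 0 ≤ (1 + ε) / 2 - ξ), abs_of_nonneg (by linarith : 0 ≤ 1 - ξ)]
  -- `ε ≤ 1/2` means `s ≥ 1/4`, whence `t / 4 ≤ s (1 - s)` whenever `t ≤ 1 - s`.
  by_cases h1 : 1 - ξ < t
  · exact .inr <| .inr <| .inr ⟨h1, by linarith⟩
  by_cases h2 : (1 + ε) / 2 - ξ < t
  · by_cases h3 : t / 4 ≤ (1 + ε) / 2 - ξ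
    · exact .inr <| .inr <| .inl ⟨h2, h3⟩
    · exact .inl ⟨by linarith, by linarith⟩
  rcases hgap with hgap | hgap
  · exact .inr <| .inl ⟨by linarith, by nlinarith⟩
  · exact .inl ⟨by linarith, by nlinarith⟩

section phi

variable {ε : ℝ} {X : Set ℝ}

@[simp]
theorem phi_zero_apply (x : ℝ) : phi ε 0 x = (1 - ε) / 2 * x := by
  simp only [phi, Fin.val_zero, Nat.cast_zero]
  ring

@[simp]
theorem phi_one_apply (x : ℝ) : phi ε 1 x = (1 - ε) / 2 * x + (1 + ε) / 2 := by
  simp only [phi, Fin.val_one, Nat.cast_one]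
  ring

-- `φ₀` and `φ₁` in the form `a * x + (1 - a) * p` of `mem_of_mapsTo_affine`, fixing `0` and `1`.
theorem phi_zero : phi ε 0 = fun x => (1 - ε) / 2 * x + (1 - (1 - ε) / 2) * 0 := by
  funext x
  rw [phi_zero_apply]
  ring

theorem phi_one : phi ε 1 = fun x => (1 - ε) / 2 * x + (1 - (1 - ε) / 2) * 1 := by
  funext x
  rw [phi_one_apply]
  ring

theorem dist_phi (hε : ε ≤ 1) (i : Fin 2) (x y : ℝ) :
    dist (phi ε i x) (phi ε i y) = (1 - ε) / 2 * dist x y := by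
  have : phi ε i x - phi ε i y = (1 - ε) / 2 * (x - y) := by simp only [phi]; ring
  rw [Real.dist_eq, Real.dist_eq, this, abs_mul, abs_of_nonneg (by linarith)]

theorem mapsTo_phi (hXinv : X = phi ε 0 '' X ∪ phi ε 1 '' X) (i : Fin 2) :
    MapsTo (phi ε i) X X := by
  intro x hx
  rw [hXinv]
  fin_cases i
  exacts [.inl (mem_image_of_mem _ hx), .inr (mem_image_of_mem _ hx)]

theorem subset_iUnion_phi (hXinv : X = phi ε 0 '' X ∪ phi ε 1 '' X) :
    X ⊆ ⋃ i, phi ε i '' X := by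
  intro x hx
  rw [hXinv] at hx
  rcases hx with hx | hx
  exacts [mem_iUnion.2 ⟨0, hx⟩, mem_iUnion.2 ⟨1, hx⟩]

theorem subset_Icc_zero_one (hε₀ : -1 < ε) (hε₁ : ε ≤ 1) (hXne : X.Nonempty)
    (hXcomp : IsCompact X) (hXinv : X = phi ε 0 '' X ∪ phi ε 1 '' X) : X ⊆ Icc 0 1 := by
  obtain ⟨M, hM, hMmax⟩ := hXcomp.exists_isGreatest hXne
  obtain ⟨m, hm, hmmin⟩ := hXcomp.exists_isLeast hXne
  obtain ⟨i, w, hw, hwM⟩ := mem_iUnion.1 (subset_iUnion_phi hXinv hM)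
  obtain ⟨j, v, hv, hvm⟩ := mem_iUnion.1 (subset_iUnion_phi hXinv hm)
  have hM1 : M ≤ 1 := by
    fin_cases i <;> simp only [Fin.zero_eta, Fin.mk_one, phi_zero_apply, phi_one_apply] at hwM <;>
      nlinarith [hMmax hw]
  have hm0 : 0 ≤ m := by
    fin_cases j <;> simp only [Fin.zero_eta, Fin.mk_one, phi_zero_apply, phi_one_apply] at hvm <;>
      nlinarith [hmmin hv]
  exact fun x hx => ⟨hm0.trans (hmmin hx), (hMmax hx).trans hM1⟩

theorem exists_self_or_one_sub_mem_left (hε₀ : -1 ≤ ε) (hε₁ : ε ≤ 1)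
    (hXinv : X = phi ε 0 '' X ∪ phi ε 1 '' X) (hX01 : X ⊆ Icc 0 1) {x : ℝ} (hx : x ∈ X) :
    ∃ ξ, (ξ = x ∨ ξ = 1 - x) ∧ 0 ≤ ξ ∧ ξ ≤ (1 - ε) / 2 ∧
      (ξ ≤ ((1 - ε) / 2) ^ 2 ∨ (1 - ε) / 2 * ((1 + ε) / 2) ≤ ξ) := by
  obtain ⟨i, w, hw, rfl⟩ := mem_iUnion.1 (subset_iUnion_phi hXinv hx)
  obtain ⟨j, v, hv, rfl⟩ := mem_iUnion.1 (subset_iUnion_phi hXinv hw)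
  obtain ⟨hv0, hv1⟩ := hX01 hv
  have hs : 0 ≤ (1 - ε) / 2 := by linarith
  have hsqv_nonneg : 0 ≤ ((1 - ε) / 2) ^ 2 * v := mul_nonneg (sq_nonneg _) hv0
  have hsqv_le : ((1 - ε) / 2) ^ 2 * v ≤ ((1 - ε) / 2) ^ 2 :=
    mul_le_of_le_one_right (sq_nonneg _) hv1
  have hsq_le : ((1 - ε) / 2) ^ 2 ≤ (1 - ε) / 2 := by nlinarith
  have hprod_nonneg : 0 ≤ (1 - ε) / 2 * ((1 + ε) / 2) := mul_nonneg hs (by linarith)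
  fin_cases i <;> [refine ⟨_, .inl rfl, ?_⟩; refine ⟨_, .inr rfl, ?_⟩] <;>
    fin_cases j <;> simp only [Fin.zero_eta, Fin.mk_one, phi_zero_apply, phi_one_apply] <;>
    refine ⟨?_, ?_, ?_⟩ <;> first | linarith | (left; linarith) | (right; linarith)

theorem levelOneEndpoints_subset (hε₀ : -1 < ε) (hε₁ : ε ≤ 1) (hXne : X.Nonempty)
    (hXcomp : IsCompact X) (hXinv : X = phi ε 0 '' X ∪ phi ε 1 '' X) :
    levelOneEndpoints ε ⊆ X := by
  have habs : |(1 - ε) / 2| < 1 := abs_lt.2 ⟨by linarith, by linarith⟩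
  have h0 : (0 : ℝ) ∈ X :=
    mem_of_mapsTo_affine hXcomp.isClosed hXne habs (phi_zero (ε := ε) ▸ mapsTo_phi hXinv 0)
  have h1 : (1 : ℝ) ∈ X :=
    mem_of_mapsTo_affine hXcomp.isClosed hXne habs (phi_one (ε := ε) ▸ mapsTo_phi hXinv 1)
  have hs : (1 - ε) / 2 ∈ X := by
    simpa using mapsTo_phi hXinv 0 h1
  have hs' : (1 + ε) / 2 ∈ X := by
    simpa using mapsTo_phi hXinv 1 h0
  simp only [levelOneEndpoints, insert_subset_iff, singleton_subset_iff]
  exact ⟨h0, hs, hs', h1⟩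

theorem uniformlyPerfectAtScale_four_of_ratio_lt (hε₀ : 0 ≤ ε) (hε₁ : ε ≤ 1 / 2)
    (hXne : X.Nonempty) (hXcomp : IsCompact X) (hXinv : X = phi ε 0 '' X ∪ phi ε 1 '' X)
    {t : ℝ} (ht : t ∈ Ioc ((1 - ε) / 2) 1) : UniformlyPerfectAtScale 4 X t := by
  have hX01 := subset_Icc_zero_one (by linarith) (by linarith) hXne hXcomp hXinv
  have hD := levelOneEndpoints_subset (by linarith) (by linarith) hXne hXcomp hXinv
  intro x hx
  obtain ⟨ξ, rfl | rfl, hξ0, hξs, hgap⟩ :=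
    exists_self_or_one_sub_mem_left (by linarith) (by linarith) hXinv hX01 hx
  · obtain ⟨d, hd, hdist⟩ :=
      exists_mem_levelOneEndpoints_dist_lt_le hε₀ hε₁ hξ0 hξs hgap ht.1 ht.2
    exact ⟨d, hD hd, hdist⟩
  · obtain ⟨d, hd, hdist⟩ :=
      exists_mem_levelOneEndpoints_dist_lt_le hε₀ hε₁ hξ0 hξs hgap ht.1 ht.2
    have hdist_eq : dist (1 - d) x = dist d (1 - x) := by
      rw [Real.dist_eq, Real.dist_eq, abs_sub_comm]
      ring_nf
    exact ⟨1 - d, hD (one_sub_mem_levelOneEndpoints hd), hdist_eq ▸ hdist⟩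

end phi

/-- For `0 < ε < 1/2`, the attractor `X` of the IFS `{φ₁, φ₂}` with
`φᵢ(x) = (1-ε)x/2 + (i-1)(1+ε)/2` is `4`-uniformly perfect. -/
theorem attractor_uniformly_perfect
    (ε : ℝ) (hε : 0 < ε) (hε' : ε < 1 / 2)
    (X : Set ℝ) (hXne : X.Nonempty) (hXcomp : IsCompact X)
    (hXinv : X = phi ε 0 '' X ∪ phi ε 1 '' X) :
    UniformlyPerfectOn 4 X := by
  have hdiam : diam X ≤ 1 := by
    have := diam_mono (subset_Icc_zero_one (by linarith) (by linarith) hXne hXcomp hXinv)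
      (isBounded_Icc 0 1)
    rwa [Real.diam_Icc zero_le_one, sub_zero] at this
  have hscale : ∀ t ∈ Ioc 0 1, UniformlyPerfectAtScale 4 X t :=
    forall_mem_Ioc_zero_one_of_mul (by linarith) (by linarith)
      (fun t => uniformlyPerfectAtScale_four_of_ratio_lt hε.le hε'.le hXne hXcomp hXinv)
      (fun t h => h.mul_of_similarities (by linarith) (dist_phi (by linarith))
        (mapsTo_phi hXinv) (subset_iUnion_phi hXinv))
  intro x hx r hr hrd
  exact hscale r ⟨hr, (hrd.trans_le hdiam).le⟩ x hx
end

section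
/- Fix C>1 and ε with 0 < ε < 1/(2C+1), and let X_ε ⊂ ℝ be the attractor of the iterated function system {φ₁,φ₂} on ℝ given by φᵢ(x) = (1−ε)x/2 + (i−1)(1+ε)/2, i=1,2. Set r = (1−ε)/2. Then every subset E ⊆ X_ε with 0 ∈ E and diam E ≤ r satisfies dist(E, X_ε \ E) ≤ ε < r/C; in particular X_ε is not C-uniformly disconnected. -/
/-!
Write `r = (1 - ε)/2`, so that `X_ε` is the attractor of `x ↦ r x` and `x ↦ r x + (1 - r)`,
whose two first-level pieces are separated by a gap of length `1 - 2r = ε`. Then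
`X ⊆ [0, 1]` with `0, 1 ∈ X`, and by self-similarity every point `x < 1` of `X` has points of
`X` to its right within `ε + rⁿ` for every `n`: the only gaps of `X` are scaled copies of the
first one. A set `E ∋ 0` of diameter at most `r` misses `1`, so the point `sup E` (which lies in
`X`) is either not in `E` or has points of `X \ E` within `ε + rⁿ`. Hence `dist(E, X \ E) ≤ ε`,
whereas uniform disconnectedness at the scale `r < diam X = 1` would force it to be `≥ r / C > ε`.
-/

open Metric Set

/-- The distance between two sets: the infimum of distances between their points. -/
noncomputable def setDist {α : Type*} [PseudoMetricSpace α] (s t : Set α) : ℝ :=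
  sInf (Set.image2 dist s t)

/-- The set `X` is `C`-uniformly disconnected: for every `x ∈ X` and every
`r ∈ (0, diam X)` there is `E ⊆ X` with `x ∈ E`, `diam E ≤ r` and `dist(E, X \ E) ≥ r / C`. -/
def UniformlyDisconnectedOn {α : Type*} [PseudoMetricSpace α] (C : ℝ) (X : Set α) : Prop :=
  ∀ x ∈ X, ∀ r : ℝ, 0 < r → r < Metric.diam X →
    ∃ E : Set α, E ⊆ X ∧ x ∈ E ∧ Metric.diam E ≤ r ∧
      ∀ a ∈ E, ∀ b ∈ X \ E, r / C ≤ dist a b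

theorem setDist_le_of_forall_pos {α : Type*} [PseudoMetricSpace α] {s t : Set α} {c : ℝ}
    (h : ∀ δ > 0, ∃ a ∈ s, ∃ b ∈ t, dist a b ≤ c + δ) : setDist s t ≤ c := by
  refine le_of_forall_pos_le_add fun δ hδ => ?_
  obtain ⟨a, ha, b, hb, hab⟩ := h δ hδ
  have hbdd : BddBelow (image2 dist s t) := ⟨0, by rintro _ ⟨_, _, _, _, rfl⟩; exact dist_nonneg⟩
  exact (csInf_le hbdd (mem_image2_of_mem ha hb)).trans hab

theorem le_setDist_of_forall {α : Type*} [PseudoMetricSpace α] {s t : Set α} {c : ℝ}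
    (hs : s.Nonempty) (ht : t.Nonempty) (h : ∀ a ∈ s, ∀ b ∈ t, c ≤ dist a b) :
    c ≤ setDist s t :=
  le_csInf (hs.image2 ht) (by rintro _ ⟨a, ha, b, hb, rfl⟩; exact h a ha b hb)

structure IsCentralCantorSet (r : ℝ) (X : Set ℝ) : Prop where
  nonempty : X.Nonempty
  isCompact : IsCompact X
  eq_union : X = (r * ·) '' X ∪ (fun x => r * x + (1 - r)) '' X

namespace IsCentralCantorSet

variable {r : ℝ} {X : Set ℝ}

theorem mul_mem (hX : IsCentralCantorSet r X) {x : ℝ} (hx : x ∈ X) : r * x ∈ X := by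
  rw [hX.eq_union]; exact Or.inl ⟨x, hx, rfl⟩

theorem mul_add_mem (hX : IsCentralCantorSet r X) {x : ℝ} (hx : x ∈ X) :
    r * x + (1 - r) ∈ X := by
  rw [hX.eq_union]; exact Or.inr ⟨x, hx, rfl⟩

theorem exists_eq (hX : IsCentralCantorSet r X) {x : ℝ} (hx : x ∈ X) :
    ∃ z ∈ X, x = r * z ∨ x = r * z + (1 - r) := by
  rw [hX.eq_union] at hx
  rcases hx with ⟨z, hz, rfl⟩ | ⟨z, hz, rfl⟩
  exacts [⟨z, hz, Or.inl rfl⟩, ⟨z, hz, Or.inr rfl⟩]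

theorem isLeast_zero (hX : IsCentralCantorSet r X) (hr0 : 0 ≤ r) (hr1 : r < 1) :
    IsLeast X 0 := by
  have hbdd := hX.isCompact.bddBelow
  have hm := hX.isCompact.sInf_mem hX.nonempty
  have hm_le : sInf X ≤ r * sInf X := csInf_le hbdd (hX.mul_mem hm)
  obtain ⟨z, hz, hmz⟩ := hX.exists_eq hm
  have hzm := mul_le_mul_of_nonneg_left (csInf_le hbdd hz) hr0
  have hm0 : sInf X = 0 := by rcases hmz with h | h <;> nlinarith
  exact ⟨hm0 ▸ hm, fun x hx => hm0 ▸ csInf_le hbdd hx⟩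

theorem isGreatest_one (hX : IsCentralCantorSet r X) (hr0 : 0 ≤ r) (hr1 : r < 1) :
    IsGreatest X 1 := by
  have hbdd := hX.isCompact.bddAbove
  have hM := hX.isCompact.sSup_mem hX.nonempty
  have hM_ge : r * sSup X + (1 - r) ≤ sSup X := le_csSup hbdd (hX.mul_add_mem hM)
  obtain ⟨z, hz, hMz⟩ := hX.exists_eq hM
  have hzM := mul_le_mul_of_nonneg_left (le_csSup hbdd hz) hr0
  have hM1 : sSup X = 1 := by rcases hMz with h | h <;> nlinarith
  exact ⟨hM1 ▸ hM, fun x hx => hM1 ▸ le_csSup hbdd hx⟩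

theorem subset_Icc (hX : IsCentralCantorSet r X) (hr0 : 0 ≤ r) (hr1 : r < 1) :
    X ⊆ Icc 0 1 :=
  fun _ hx => ⟨(hX.isLeast_zero hr0 hr1).2 hx, (hX.isGreatest_one hr0 hr1).2 hx⟩

theorem diam_eq_one (hX : IsCentralCantorSet r X) (hr0 : 0 ≤ r) (hr1 : r < 1) :
    diam X = 1 := by
  refine le_antisymm ?_ ?_
  · simpa [Real.diam_Icc] using diam_mono (hX.subset_Icc hr0 hr1) (isBounded_Icc 0 1)
  · simpa using dist_le_diam_of_mem hX.isCompact.isBounded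
      (hX.isLeast_zero hr0 hr1).1 (hX.isGreatest_one hr0 hr1).1

theorem exists_gt_sub_le (hX : IsCentralCantorSet r X) (hr0 : 0 < r) (hr : 2 * r < 1)
    (n : ℕ) {x : ℝ} (hx : x ∈ X) (hx1 : x < 1) :
    ∃ y ∈ X, x < y ∧ y - x ≤ 1 - 2 * r + r ^ n := by
  have hIcc := hX.subset_Icc hr0.le (by linarith)
  induction n generalizing x with
  | zero => exact ⟨1, (hX.isGreatest_one hr0.le (by linarith)).1, hx1, by linarith [(hIcc hx).1]⟩
  | succ n ih =>
    obtain ⟨z, hz, hxz⟩ := hX.exists_eq hx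
    rcases (hIcc hz).2.lt_or_eq with hz1 | rfl
    · -- both pieces are similar copies of `X` of ratio `r`, so the gap found for `z` scales
      obtain ⟨y, hy, hzy, hyz⟩ := ih hz hz1
      have hscaled : r * (y - z) ≤ r * (1 - 2 * r + r ^ n) := mul_le_mul_of_nonneg_left hyz hr0.le
      have hpow : r * (1 - 2 * r + r ^ n) ≤ 1 - 2 * r + r ^ (n + 1) := by
        rw [pow_succ]; nlinarith
      have hrzy := mul_lt_mul_of_pos_left hzy hr0
      rcases hxz with rfl | rfl
      · exact ⟨r * y, hX.mul_mem hy, hrzy, by linarith⟩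
      · exact ⟨r * y + (1 - r), hX.mul_add_mem hy, by linarith, by linarith⟩
    · rcases hxz with rfl | rfl
      · exact ⟨1 - r, by simpa using hX.mul_add_mem (hX.isLeast_zero hr0.le (by linarith)).1,
          by linarith, by linarith [pow_pos hr0 (n + 1)]⟩
      · linarith

theorem setDist_diff_le (hX : IsCentralCantorSet r X) (hr0 : 0 < r) (hr : 2 * r < 1)
    {E : Set ℝ} (hEX : E ⊆ X) (hE : E.Nonempty) (h1E : 1 ∉ E) :
    setDist E (X \ E) ≤ 1 - 2 * r := by
  have hbdd : BddAbove E := hX.isCompact.bddAbove.mono hEX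
  have hsX : sSup E ∈ X :=
    closure_minimal hEX hX.isCompact.isClosed (csSup_mem_closure hE hbdd)
  have hs1 : sSup E ≤ 1 := (hX.isGreatest_one hr0.le (by linarith)).2 hsX
  refine setDist_le_of_forall_pos fun δ hδ => ?_
  by_cases hsE : sSup E ∈ E
  · obtain ⟨n, hn⟩ := exists_pow_lt_of_lt_one hδ (show r < 1 by linarith)
    obtain ⟨y, hyX, hsy, hys⟩ :=
      hX.exists_gt_sub_le hr0 hr n hsX (hs1.lt_of_ne fun h => h1E (h ▸ hsE))
    refine ⟨sSup E, hsE, y, ⟨hyX, fun hyE => (le_csSup hbdd hyE).not_gt hsy⟩, ?_⟩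
    rw [Real.dist_eq, abs_sub_comm, abs_of_pos (by linarith)]
    linarith
  · obtain ⟨p, hp, hps⟩ := exists_lt_of_lt_csSup hE (sub_lt_self (sSup E) hδ)
    refine ⟨p, hp, sSup E, ⟨hsX, hsE⟩, ?_⟩
    rw [Real.dist_eq, abs_sub_comm, abs_of_nonneg (by linarith [le_csSup hbdd hp])]
    linarith

theorem one_notMem_of_zero_mem_of_diam_le (hX : IsCentralCantorSet r X) (hr : r < 1)
    {E : Set ℝ} (hEX : E ⊆ X) (h0E : 0 ∈ E) (hdiam : diam E ≤ r) : 1 ∉ E := fun h1E => by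
  have := dist_le_diam_of_mem (hX.isCompact.isBounded.subset hEX) h0E h1E
  norm_num at this
  linarith

theorem not_uniformlyDisconnectedOn (hX : IsCentralCantorSet r X) (hr0 : 0 < r)
    (hr : 2 * r < 1) {C : ℝ} (hC : 1 - 2 * r < r / C) : ¬ UniformlyDisconnectedOn C X := by
  intro hUD
  have h0X := (hX.isLeast_zero hr0.le (by linarith)).1
  obtain ⟨E, hEX, h0E, hdiam, hsep⟩ :=
    hUD 0 h0X r hr0 (by rw [hX.diam_eq_one hr0.le (by linarith)]; linarith)
  have h1E := hX.one_notMem_of_zero_mem_of_diam_le (by linarith) hEX h0E hdiam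
  have h1 : (1 : ℝ) ∈ X \ E := ⟨(hX.isGreatest_one hr0.le (by linarith)).1, h1E⟩
  have := le_setDist_of_forall ⟨0, h0E⟩ ⟨1, h1⟩ hsep
  linarith [hX.setDist_diff_le hr0 hr hEX ⟨0, h0E⟩ h1E]

end IsCentralCantorSet

theorem isCentralCantorSet_of_eq_phi_union {ε : ℝ} {X : Set ℝ} (hXne : X.Nonempty)
    (hXcomp : IsCompact X) (hXinv : X = phi ε 0 '' X ∪ phi ε 1 '' X) :
    IsCentralCantorSet ((1 - ε) / 2) X := by
  have h0 : phi ε 0 = ((1 - ε) / 2 * ·) := by funext x; simp [phi]; ring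
  have h1 : phi ε 1 = fun x => (1 - ε) / 2 * x + (1 - (1 - ε) / 2) := by
    funext x; simp [phi]; ring
  exact ⟨hXne, hXcomp, h0 ▸ h1 ▸ hXinv⟩

/-- For `C > 1` and `0 < ε < 1/(2C+1)`, with `X` the attractor of the IFS `{φ₁, φ₂}`,
`φᵢ(x) = (1-ε)x/2 + (i-1)(1+ε)/2`, and `r = (1-ε)/2`: every `E ⊆ X` with `0 ∈ E` and
`diam E ≤ r` satisfies `dist(E, X \ E) ≤ ε < r / C`; in particular `X` is not
`C`-uniformly disconnected. -/
theorem attractor_not_uniformly_disconnected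
    (C ε : ℝ) (hC : 1 < C) (hε : 0 < ε) (hε' : ε < 1 / (2 * C + 1))
    (X : Set ℝ) (hXne : X.Nonempty) (hXcomp : IsCompact X)
    (hXinv : X = phi ε 0 '' X ∪ phi ε 1 '' X) :
    (∀ E ⊆ X, 0 ∈ E → Metric.diam E ≤ (1 - ε) / 2 →
      setDist E (X \ E) ≤ ε) ∧
    ε < ((1 - ε) / 2) / C ∧
    ¬ UniformlyDisconnectedOn C X := by
  have hX := isCentralCantorSet_of_eq_phi_union hXne hXcomp hXinv
  have hgap : 1 - 2 * ((1 - ε) / 2) = ε := by ring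
  have hεC : ε * (2 * C + 1) < 1 := (lt_div_iff₀ (by linarith)).mp hε'
  have hr0 : 0 < (1 - ε) / 2 := by nlinarith
  have hr : 2 * ((1 - ε) / 2) < 1 := by linarith
  have hlt : ε < ((1 - ε) / 2) / C := by rw [lt_div_iff₀ (by linarith)]; linarith
  refine ⟨fun E hEX h0E hdiam => ?_, hlt, hX.not_uniformlyDisconnectedOn hr0 hr (by rwa [hgap])⟩
  have h1E := hX.one_notMem_of_zero_mem_of_diam_le (by linarith) hEX h0E hdiam
  simpa only [hgap] using hX.setDist_diff_le hr0 hr hEX ⟨0, h0E⟩ h1E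
end

section
/- Let n ≥ 2 and let φ₁,…,φₙ: ℝᵐ → ℝᵐ (m ≥ 1) be contracting similarities for which there exists a nonempty bounded open set B ⊂ ℝᵐ such that the closures φ₁(B̄),…,φₙ(B̄) are pairwise disjoint and contained in B. Then the attractor X of {φ₁,…,φₙ} is a compact set which is uniformly perfect and uniformly disconnected. -/
/-
For a word `w = i₁ ⋯ iₖ` write `φ_w = φ_{i₁} ∘ ⋯ ∘ φ_{iₖ}` and `r_w = r_{i₁} ⋯ r_{iₖ}`.
The attractor lies in `B̄`, so the strong separation condition makes the first-level pieces
`φᵢ(X)` pairwise `δ`-apart for some `δ > 0`, and then distinct cylinders `φ_w(X)`, `φ_u(X)` of the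
same length are `δ r_w`-apart. Given `x ∈ X` and a scale `t < diam X`, stop along the address of
`x` at the first cylinder `φ_w(X) ∋ x` with `r_w diam X < t`; then `r_w ≥ r_min t / diam X`.
This cylinder is a set `E` witnessing uniform disconnectedness, and a point of it lying in another
first-level subcylinder than `x` witnesses uniform perfectness.
-/

open Metric Set

open Function

theorem exists_pos_le_dist_of_pairwise_disjoint {ι α : Type*} [Finite ι] [MetricSpace α]
    {s : ι → Set α} (hs : ∀ i, IsCompact (s i)) (hdisj : Pairwise (Disjoint on s)) :
    ∃ δ > 0, ∀ i j, i ≠ j → ∀ a ∈ s i, ∀ b ∈ s j, δ ≤ dist a b := by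
  have hpair : ∀ p : ι × ι, ∃ δ > 0, p.1 ≠ p.2 → ∀ a ∈ s p.1, ∀ b ∈ s p.2, δ ≤ dist a b := by
    rintro ⟨i, j⟩
    by_cases hij : i = j
    · exact ⟨1, one_pos, fun h => absurd hij h⟩
    obtain ⟨δ, hδ0, hδ⟩ := exists_pos_forall_lt_edist (hs i) (hs j).isClosed (hdisj hij)
    refine ⟨δ, hδ0, fun _ a ha b hb => ?_⟩
    have h := hδ a ha b hb
    rw [edist_nndist, ENNReal.coe_lt_coe] at h
    exact_mod_cast h.le
  choose δ hδ0 hδ using hpair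
  cases isEmpty_or_nonempty ι
  · exact ⟨1, one_pos, fun i => isEmptyElim i⟩
  obtain ⟨p, hp⟩ := Finite.exists_min δ
  exact ⟨δ p, hδ0 p, fun i j hij a ha b hb => (hp (i, j)).trans (hδ (i, j) hij a ha b hb)⟩

variable {ι α : Type*}

def wordMap (φ : ι → α → α) : List ι → α → α
  | [] => id
  | i :: w => φ i ∘ wordMap φ w

section Words

variable (φ : ι → α → α)

@[simp]
theorem wordMap_nil (x : α) : wordMap φ [] x = x := rfl

@[simp]
theorem wordMap_cons (i : ι) (w : List ι) (x : α) :
    wordMap φ (i :: w) x = φ i (wordMap φ w x) := rfl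

end Words

theorem mapsTo_wordMap {φ : ι → α → α} {s : Set α} (h : ∀ i, MapsTo (φ i) s s) :
    ∀ w : List ι, MapsTo (wordMap φ w) s s
  | [] => mapsTo_id s
  | i :: w => (h i).comp (mapsTo_wordMap h w)

theorem exists_length_eq_mem_image_wordMap {φ : ι → α → α} {X : Set α}
    (hX : X ⊆ ⋃ i, φ i '' X) : ∀ (k : ℕ) {x : α}, x ∈ X →
      ∃ w : List ι, w.length = k ∧ x ∈ wordMap φ w '' X
  | 0, x, hx => ⟨[], rfl, x, hx, rfl⟩
  | k + 1, _, hx => by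
    obtain ⟨i, y, hy, rfl⟩ := mem_iUnion.1 (hX hx)
    obtain ⟨w, hw, z, hz, rfl⟩ := exists_length_eq_mem_image_wordMap hX k hy
    exact ⟨i :: w, by simp [hw], z, hz, rfl⟩

theorem exists_mem_image_wordMap_prod_mem_Ico {φ : ι → α → α} {X : Set α} {r : ι → ℝ}
    {ρ₀ ρ : ℝ} (hX : X ⊆ ⋃ i, φ i '' X) (hρ₀ : 0 ≤ ρ₀) (hρ₀r : ∀ i, ρ₀ ≤ r i)
    (hrρ : ∀ i, r i ≤ ρ) (hρ : ρ < 1) {x : α} (hx : x ∈ X) {s : ℝ} (hs0 : 0 < s)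
    (hs1 : s ≤ 1) :
    ∃ w : List ι, x ∈ wordMap φ w '' X ∧ (w.map r).prod ∈ Ico (ρ₀ * s) s := by
  obtain ⟨k, hk⟩ := exists_pow_lt_of_lt_one hs0 hρ
  induction k generalizing x s with
  | zero => exact absurd hs1 (by simpa using hk)
  | succ k ih =>
    obtain ⟨i, y, hy, rfl⟩ := mem_iUnion.1 (hX hx)
    rcases lt_or_ge (r i) s with his | his
    · refine ⟨[i], ⟨y, hy, rfl⟩, ?_, by simpa using his⟩
      simpa using (mul_le_of_le_one_right hρ₀ hs1).trans (hρ₀r i)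
    have hri : 0 < r i := hs0.trans_le his
    have hk' : ρ ^ k < s / r i := by
      rw [lt_div_iff₀ hri]
      calc ρ ^ k * r i ≤ ρ ^ k * ρ :=
            mul_le_mul_of_nonneg_left (hrρ i) (pow_nonneg (hri.le.trans (hrρ i)) k)
        _ < s := by rwa [← pow_succ]
    obtain ⟨w, ⟨z, hz, rfl⟩, hw₀, hw⟩ :=
      ih hy (div_pos hs0 hri) ((div_le_one hri).2 his) hk'
    refine ⟨i :: w, ⟨z, hz, rfl⟩, ?_, ?_⟩
    · rw [mul_div_assoc', div_le_iff₀' hri] at hw₀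
      simpa using hw₀
    · rw [lt_div_iff₀' hri] at hw
      simpa using hw

section Similarities

variable [MetricSpace α] {φ : ι → α → α} {r : ι → ℝ}

theorem dist_wordMap (hφ : ∀ i x y, dist (φ i x) (φ i y) = r i * dist x y) :
    ∀ (w : List ι) (x y : α), dist (wordMap φ w x) (wordMap φ w y) = (w.map r).prod * dist x y
  | [], x, y => by simp
  | i :: w, x, y => by simp [hφ, dist_wordMap hφ w, mul_assoc]

theorem diam_image_wordMap_le (hφ : ∀ i x y, dist (φ i x) (φ i y) = r i * dist x y)
    (hr0 : ∀ i, 0 ≤ r i) {s : Set α} (hs : Bornology.IsBounded s) (w : List ι) :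
    diam (wordMap φ w '' s) ≤ (w.map r).prod * diam s := by
  have hw : 0 ≤ (w.map r).prod := List.prod_nonneg (by simpa using fun i _ => hr0 i)
  refine diam_le_of_forall_dist_le (mul_nonneg hw diam_nonneg) ?_
  rintro _ ⟨a, ha, rfl⟩ _ ⟨b, hb, rfl⟩
  rw [dist_wordMap hφ]
  exact mul_le_mul_of_nonneg_left (dist_le_diam_of_mem hs ha hb) hw

/- `x ↦ infDist x K` attains its maximum on `X` at some `φ i y`, and there it is at most
`r i` times its value at `y`. -/
theorem subset_of_subset_iUnion_image_of_mapsTo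
    (hφ : ∀ i x y, dist (φ i x) (φ i y) = r i * dist x y) (hr0 : ∀ i, 0 ≤ r i)
    (hr1 : ∀ i, r i < 1) {X K : Set α} (hXc : IsCompact X) (hX : X ⊆ ⋃ i, φ i '' X)
    (hKc : IsCompact K) (hKne : K.Nonempty) (hK : ∀ i, MapsTo (φ i) K K) : X ⊆ K := by
  rcases X.eq_empty_or_nonempty with rfl | hXne
  · exact empty_subset K
  obtain ⟨x₀, hx₀, hmax⟩ :=
    hXc.exists_isMaxOn hXne (continuous_infDist_pt K).continuousOn
  obtain ⟨i, y, hy, rfl⟩ := mem_iUnion.1 (hX hx₀)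
  obtain ⟨p, hp, hyp⟩ := hKc.exists_infDist_eq_dist hKne y
  have hle : infDist (φ i y) K ≤ r i * infDist (φ i y) K :=
    calc infDist (φ i y) K ≤ dist (φ i y) (φ i p) := infDist_le_dist_of_mem (hK i hp)
      _ = r i * infDist y K := by rw [hφ, hyp]
      _ ≤ r i * infDist (φ i y) K := mul_le_mul_of_nonneg_left (hmax hy) (hr0 i)
  have hzero : infDist (φ i y) K = 0 := by nlinarith [hr1 i, infDist_nonneg (x := φ i y) (s := K)]
  intro x hx
  refine (hKc.isClosed.mem_iff_infDist_zero hKne).2 (le_antisymm ?_ infDist_nonneg)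
  exact hzero ▸ hmax hx

theorem le_dist_wordMap_of_ne (hφ : ∀ i x y, dist (φ i x) (φ i y) = r i * dist x y)
    (hr0 : ∀ i, 0 ≤ r i) (hr1 : ∀ i, r i ≤ 1) {X : Set α} (hXφ : ∀ i, MapsTo (φ i) X X)
    {δ : ℝ} (hδ0 : 0 ≤ δ) (hδ : ∀ i j, i ≠ j → ∀ a ∈ X, ∀ b ∈ X, δ ≤ dist (φ i a) (φ j b)) :
    ∀ {w u : List ι}, w.length = u.length → w ≠ u → ∀ {a b : α}, a ∈ X → b ∈ X →
      δ * (w.map r).prod ≤ dist (wordMap φ w a) (wordMap φ u b)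
  | [], [], _, hne, _, _, _, _ => absurd rfl hne
  | i :: w, j :: u, hlen, hne, a, b, ha, hb => by
    simp only [List.map_cons, List.prod_cons, wordMap_cons]
    rcases eq_or_ne i j with rfl | hij
    · have hwu : w ≠ u := fun h => hne (h ▸ rfl)
      have ih := le_dist_wordMap_of_ne hφ hr0 hr1 hXφ hδ0 hδ (by simpa using hlen) hwu ha hb
      calc δ * (r i * (w.map r).prod) = r i * (δ * (w.map r).prod) := by ring
        _ ≤ r i * dist (wordMap φ w a) (wordMap φ u b) := mul_le_mul_of_nonneg_left ih (hr0 i)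
        _ = _ := (hφ i _ _).symm
    · have hprod : r i * (w.map r).prod ≤ 1 := by
        simpa using List.prod_map_le_prod_map₀ r (fun _ => 1) (s := i :: w)
          (fun k _ => hr0 k) (fun k _ => hr1 k)
      calc δ * (r i * (w.map r).prod) ≤ δ := mul_le_of_le_one_right hδ0 hprod
        _ ≤ _ := hδ i j hij _ (mapsTo_wordMap hXφ w ha) _ (mapsTo_wordMap hXφ u hb)

theorem exists_mem_image_wordMap_of_lt_diam {X : Set α} {ρ₀ ρ δ c : ℝ}
    (hX : X ⊆ ⋃ i, φ i '' X) (hρ₀ : 0 ≤ ρ₀) (hρ₀r : ∀ i, ρ₀ ≤ r i) (hrρ : ∀ i, r i ≤ ρ)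
    (hρ : ρ < 1) (hδ0 : 0 ≤ δ) (hc : diam X ≤ c * (δ * ρ₀)) {x : α} (hx : x ∈ X) {t : ℝ}
    (ht0 : 0 < t) (htX : t < diam X) :
    ∃ w : List ι, x ∈ wordMap φ w '' X ∧ (w.map r).prod * diam X < t ∧
      t / c ≤ δ * (w.map r).prod := by
  have hD : 0 < diam X := ht0.trans htX
  obtain ⟨w, hxw, hw₀, hw⟩ := exists_mem_image_wordMap_prod_mem_Ico hX hρ₀ hρ₀r hrρ hρ hx
    (div_pos ht0 hD) ((div_le_one hD).2 htX.le)
  have hc0 : 0 < c := pos_of_mul_pos_left (hD.trans_le hc) (mul_nonneg hδ0 hρ₀)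
  refine ⟨w, hxw, (lt_div_iff₀ hD).1 hw, (div_le_iff₀ hc0).2 ?_⟩
  calc t = t / diam X * diam X := (div_mul_cancel₀ t hD.ne').symm
    _ ≤ t / diam X * (c * (δ * ρ₀)) := by gcongr
    _ = c * (δ * (ρ₀ * (t / diam X))) := by ring
    _ ≤ c * (δ * (w.map r).prod) := by gcongr
    _ = δ * (w.map r).prod * c := by ring

theorem uniformlyPerfectOn_of_separated [Nontrivial ι]
    (hφ : ∀ i x y, dist (φ i x) (φ i y) = r i * dist x y) (hr0 : ∀ i, 0 ≤ r i) {X : Set α}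
    (hXb : Bornology.IsBounded X) (hX : X ⊆ ⋃ i, φ i '' X) (hXφ : ∀ i, MapsTo (φ i) X X)
    {ρ₀ ρ δ c : ℝ} (hρ₀ : 0 ≤ ρ₀) (hρ₀r : ∀ i, ρ₀ ≤ r i) (hrρ : ∀ i, r i ≤ ρ) (hρ : ρ < 1)
    (hδ0 : 0 ≤ δ) (hδ : ∀ i j, i ≠ j → ∀ a ∈ X, ∀ b ∈ X, δ ≤ dist (φ i a) (φ j b))
    (hc : diam X ≤ c * (δ * ρ₀)) : UniformlyPerfectOn c X := by
  intro x hx t ht0 htX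
  obtain ⟨w, ⟨y, hy, rfl⟩, hwt, hwc⟩ :=
    exists_mem_image_wordMap_of_lt_diam hX hρ₀ hρ₀r hrρ hρ hδ0 hc hx ht0 htX
  obtain ⟨i, z, hz, rfl⟩ := mem_iUnion.1 (hX hy)
  obtain ⟨j, hji⟩ := exists_ne i
  have hw : 0 ≤ (w.map r).prod := List.prod_nonneg (by simp [hr0])
  refine ⟨wordMap φ w (φ j z), mapsTo_wordMap hXφ w (hXφ j hz), ?_, ?_⟩
  all_goals rw [dist_wordMap hφ]
  · calc (w.map r).prod * dist (φ j z) (φ i z) ≤ (w.map r).prod * diam X :=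
          mul_le_mul_of_nonneg_left (dist_le_diam_of_mem hXb (hXφ j hz) (hXφ i hz)) hw
      _ < t := hwt
  · calc t / c ≤ δ * (w.map r).prod := hwc
      _ ≤ (w.map r).prod * dist (φ j z) (φ i z) := by
          rw [mul_comm]; exact mul_le_mul_of_nonneg_left (hδ j i hji z hz z hz) hw

theorem uniformlyDisconnectedOn_of_separated
    (hφ : ∀ i x y, dist (φ i x) (φ i y) = r i * dist x y) (hr0 : ∀ i, 0 ≤ r i) {X : Set α}
    (hXb : Bornology.IsBounded X) (hX : X ⊆ ⋃ i, φ i '' X) (hXφ : ∀ i, MapsTo (φ i) X X)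
    {ρ₀ ρ δ c : ℝ} (hρ₀ : 0 ≤ ρ₀) (hρ₀r : ∀ i, ρ₀ ≤ r i) (hrρ : ∀ i, r i ≤ ρ) (hρ : ρ < 1)
    (hδ0 : 0 ≤ δ) (hδ : ∀ i j, i ≠ j → ∀ a ∈ X, ∀ b ∈ X, δ ≤ dist (φ i a) (φ j b))
    (hc : diam X ≤ c * (δ * ρ₀)) : UniformlyDisconnectedOn c X := by
  intro x hx t ht0 htX
  obtain ⟨w, hxw, hwt, hwc⟩ :=
    exists_mem_image_wordMap_of_lt_diam hX hρ₀ hρ₀r hrρ hρ hδ0 hc hx ht0 htX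
  refine ⟨wordMap φ w '' X, (mapsTo_wordMap hXφ w).image_subset, hxw,
    (diam_image_wordMap_le hφ hr0 hXb w).trans hwt.le, ?_⟩
  rintro _ ⟨a, ha, rfl⟩ b ⟨hb, hbw⟩
  obtain ⟨u, hu, b', hb', rfl⟩ := exists_length_eq_mem_image_wordMap hX w.length hb
  have hwu : w ≠ u := by
    rintro rfl
    exact hbw ⟨b', hb', rfl⟩
  have hr1 : ∀ i, r i ≤ 1 := fun i => (hrρ i).trans hρ.le
  exact hwc.trans (le_dist_wordMap_of_ne hφ hr0 hr1 hXφ hδ0 hδ hu.symm hwu ha hb')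

end Similarities

theorem attractor_uniformly_perfect_and_disconnected_general
    (m : ℕ) (n : ℕ) (hn : 2 ≤ n)
    (φ : Fin n → EuclideanSpace ℝ (Fin m) → EuclideanSpace ℝ (Fin m))
    (hsim : ∀ i, ∃ r : ℝ, 0 < r ∧ r < 1 ∧ ∀ x y, dist (φ i x) (φ i y) = r * dist x y)
    (B : Set (EuclideanSpace ℝ (Fin m))) (hBne : B.Nonempty)
    (hBbdd : Bornology.IsBounded B)
    (hdisj : ∀ i j, i ≠ j → Disjoint (φ i '' closure B) (φ j '' closure B))
    (hsub : ∀ i, φ i '' closure B ⊆ B)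
    (X : Set (EuclideanSpace ℝ (Fin m))) (hXcomp : IsCompact X)
    (hXinv : X = ⋃ i, φ i '' X) :
    IsCompact X ∧ (∃ c : ℝ, 1 < c ∧ UniformlyPerfectOn c X) ∧
      (∃ C : ℝ, 1 ≤ C ∧ UniformlyDisconnectedOn C X) := by
  have : Nontrivial (Fin n) := Fin.nontrivial_iff_two_le.2 hn
  choose r hr0 hr1 hφ using hsim
  obtain ⟨i₀, hi₀⟩ := Finite.exists_min r
  obtain ⟨i₁, hi₁⟩ := Finite.exists_max r
  have hr0' : ∀ i, 0 ≤ r i := fun i => (hr0 i).le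
  have hX : X ⊆ ⋃ i, φ i '' X := hXinv.subset
  have hXφ : ∀ i, MapsTo (φ i) X X := fun i =>
    mapsTo_iff_image_subset.2 ((subset_iUnion (fun j => φ j '' X) i).trans hXinv.symm.subset)
  have hXB : X ⊆ closure B :=
    subset_of_subset_iUnion_image_of_mapsTo hφ hr0' hr1 hXcomp hX hBbdd.isCompact_closure
      hBne.closure fun i _ hx => subset_closure (hsub i (mem_image_of_mem _ hx))
  have hφc : ∀ i, Continuous (φ i) := fun i =>
    (LipschitzWith.of_dist_le_mul (K := ⟨r i, hr0' i⟩) fun x y => (hφ i x y).le).continuous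
  obtain ⟨δ, hδ0, hδ⟩ := exists_pos_le_dist_of_pairwise_disjoint (s := fun i => φ i '' X)
    (fun i => hXcomp.image (hφc i))
    fun i j hij => (hdisj i j hij).mono (image_mono hXB) (image_mono hXB)
  have hδ' : ∀ i j, i ≠ j → ∀ a ∈ X, ∀ b ∈ X, δ ≤ dist (φ i a) (φ j b) :=
    fun i j hij a ha b hb => hδ i j hij _ (mem_image_of_mem _ ha) _ (mem_image_of_mem _ hb)
  set c := max (diam X / (δ * r i₀)) 2
  have hc : diam X ≤ c * (δ * r i₀) :=
    (div_le_iff₀ (mul_pos hδ0 (hr0 i₀))).1 (le_max_left _ _)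
  have hc1 : 1 < c := one_lt_two.trans_le (le_max_right _ _)
  exact ⟨hXcomp,
    ⟨c, hc1, uniformlyPerfectOn_of_separated hφ hr0' hXcomp.isBounded hX hXφ (hr0' i₀) hi₀ hi₁
      (hr1 i₁) hδ0.le hδ' hc⟩,
    ⟨c, hc1.le, uniformlyDisconnectedOn_of_separated hφ hr0' hXcomp.isBounded hX hXφ
      (hr0' i₀) hi₀ hi₁ (hr1 i₁) hδ0.le hδ' hc⟩⟩

/-- Let `n ≥ 2` and let `φ₁, …, φₙ` be contracting similarities of `ℝᵐ` (`m ≥ 1`) for which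
there is a nonempty bounded open set `B` such that the closures `φ₁(B̄), …, φₙ(B̄)` are
pairwise disjoint and contained in `B`. Then the attractor `X` of `{φ₁, …, φₙ}` is compact,
uniformly perfect and uniformly disconnected. -/
theorem attractor_uniformly_perfect_and_disconnected
    (m : ℕ) (hm : 1 ≤ m) (n : ℕ) (hn : 2 ≤ n)
    (φ : Fin n → EuclideanSpace ℝ (Fin m) → EuclideanSpace ℝ (Fin m))
    (hsim : ∀ i, ∃ r : ℝ, 0 < r ∧ r < 1 ∧ ∀ x y, dist (φ i x) (φ i y) = r * dist x y)
    (B : Set (EuclideanSpace ℝ (Fin m))) (hBne : B.Nonempty) (hBopen : IsOpen B)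
    (hBbdd : Bornology.IsBounded B)
    (hdisj : ∀ i j, i ≠ j → Disjoint (φ i '' closure B) (φ j '' closure B))
    (hsub : ∀ i, φ i '' closure B ⊆ B)
    (X : Set (EuclideanSpace ℝ (Fin m))) (hXne : X.Nonempty) (hXcomp : IsCompact X)
    (hXinv : X = ⋃ i, φ i '' X) :
    IsCompact X ∧ (∃ c : ℝ, 1 < c ∧ UniformlyPerfectOn c X) ∧
      (∃ C : ℝ, 1 ≤ C ∧ UniformlyDisconnectedOn C X) :=
  attractor_uniformly_perfect_and_disconnected_general m n hn φ hsim B hBne hBbdd hdisj hsub X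
    hXcomp hXinv
end

section
/- Let n ≥ 1 and let X ⊂ ℝⁿ be a compact set with at least two points which is C-uniformly disconnected for some C ≥ 1. Then X is porous: there exists α ∈ (0,1) such that for every x ∈ X and every r ∈ (0, diam X) there exists a point z ∈ B(x,r) with B(z, αr) ∩ X = ∅. -/
/-!
At scale `r / 2`, uniform disconnectedness cuts out a piece `E ∋ x` of diameter at most `r / 2`
lying at distance at least `r / (2C)` from the rest of `X`. Moving away from `x`, the distance to
`E` grows continuously from `0`, so some point `z` with `|z - x| ≤ r / 2 + r / (4C) < r` is at
distance exactly `r / (4C)` from `E`. The ball `B(z, r / (4C))` misses `E`, and it misses `X \ E`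
because the gap between `E` and `X \ E` is `r / (2C)`.
-/

open Metric Set

theorem Metric.disjoint_ball_of_infDist_add_le {α : Type*} [PseudoMetricSpace α]
    {X E : Set α} {z : α} {g ρ : ℝ} (hE : E.Nonempty)
    (hsep : ∀ a ∈ E, ∀ b ∈ X \ E, g ≤ dist a b)
    (hρ : ρ ≤ infDist z E) (hg : infDist z E + ρ ≤ g) :
    Disjoint (ball z ρ) X := by
  refine Set.disjoint_left.mpr fun p hpz hpX => ?_
  rw [mem_ball] at hpz
  by_cases hpE : p ∈ E
  · linarith [infDist_le_dist_of_mem (x := z) hpE, dist_comm p z]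
  · have hgp : g ≤ infDist p E :=
      (le_infDist hE).mpr fun a ha => dist_comm a p ▸ hsep a ha p ⟨hpX, hpE⟩
    linarith [infDist_le_infDist_add_dist (x := p) (y := z) (s := E)]

theorem exists_dist_le_infDist_eq {V : Type*} [NormedAddCommGroup V] [NormedSpace ℝ V]
    [Nontrivial V] {E : Set V} {x : V} {d s : ℝ} (hx : x ∈ E) (hEd : E ⊆ closedBall x d)
    (hd : 0 ≤ d) (hs : 0 ≤ s) :
    ∃ z, dist z x ≤ d + s ∧ infDist z E = s := by
  obtain ⟨v, hv⟩ := exists_norm_eq V (add_nonneg hd hs)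
  have hvmem : x + v ∈ closedBall x (d + s) := by simp [hv]
  have hfar : s ≤ infDist (x + v) E := by
    refine (le_infDist ⟨x, hx⟩).mpr fun e he => ?_
    have hex : dist e x ≤ d := hEd he
    have := dist_triangle (x + v) e x
    simp only [dist_self_add_left, hv] at this
    linarith
  have hivt := (convex_closedBall x (d + s)).isPreconnected.intermediate_value
    (mem_closedBall_self (add_nonneg hd hs)) hvmem (continuous_infDist_pt E).continuousOn
  exact hivt ⟨by simp [infDist_zero_of_mem hx, hs], hfar⟩

theorem UniformlyDisconnectedOn.porous {V : Type*} [NormedAddCommGroup V] [NormedSpace ℝ V]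
    {X : Set V} {C : ℝ} (hC : 1 ≤ C) (hud : UniformlyDisconnectedOn C X) :
    ∀ x ∈ X, ∀ r : ℝ, 0 < r → r < diam X →
      ∃ z ∈ ball x r, ball z (1 / (4 * C) * r) ∩ X = ∅ := by
  intro x hx r hr hrX
  have hC0 : 0 < C := by linarith
  have hXb : Bornology.IsBounded X := by
    by_contra hXb
    linarith [diam_eq_zero_of_unbounded hXb]
  have : Nontrivial V := Set.nontrivial_of_nontrivial <|
    Set.not_subsingleton_iff.mp fun hXs => by linarith [diam_subsingleton hXs]
  obtain ⟨E, hEX, hxE, hdiamE, hsep⟩ := hud x hx (r / 2) (by positivity) (by linarith)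
  have hEball : E ⊆ closedBall x (r / 2) := fun e he =>
    (dist_le_diam_of_mem (hXb.subset hEX) he hxE).trans hdiamE
  obtain ⟨z, hzx, hzE⟩ :=
    exists_dist_le_infDist_eq hxE hEball (by positivity) (by positivity : 0 ≤ r / (4 * C))
  have hquarter : r / (4 * C) ≤ r / 4 := div_le_div_of_nonneg_left hr.le (by norm_num) (by linarith)
  rw [show 1 / (4 * C) * r = r / (4 * C) by ring]
  refine ⟨z, by rw [mem_ball]; linarith, Set.disjoint_iff_inter_eq_empty.mp ?_⟩
  exact disjoint_ball_of_infDist_add_le ⟨x, hxE⟩ hsep hzE.ge (le_of_eq (by rw [hzE]; ring))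

theorem porous_of_uniformlyDisconnected_general
    (n : ℕ)
    (X : Set (EuclideanSpace ℝ (Fin n)))
    (C : ℝ) (hC : 1 ≤ C) (hud : UniformlyDisconnectedOn C X) :
    ∃ α : ℝ, 0 < α ∧ α < 1 ∧
      ∀ x ∈ X, ∀ r : ℝ, 0 < r → r < Metric.diam X →
        ∃ z ∈ Metric.ball x r, Metric.ball z (α * r) ∩ X = ∅ := by
  refine ⟨1 / (4 * C), by positivity, ?_, hud.porous hC⟩
  rw [div_lt_one (by positivity)]
  linarith

/-- A compact subset of `ℝⁿ` with at least two points that is `C`-uniformly disconnected is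
porous: there is `α ∈ (0,1)` such that for every `x ∈ X` and every `r ∈ (0, diam X)` there
is a point `z ∈ B(x,r)` with `B(z, αr) ∩ X = ∅`. -/
theorem porous_of_uniformlyDisconnected
    (n : ℕ) (hn : 1 ≤ n)
    (X : Set (EuclideanSpace ℝ (Fin n))) (hXcomp : IsCompact X)
    (hX2 : ∃ x ∈ X, ∃ y ∈ X, x ≠ y)
    (C : ℝ) (hC : 1 ≤ C) (hud : UniformlyDisconnectedOn C X) :
    ∃ α : ℝ, 0 < α ∧ α < 1 ∧
      ∀ x ∈ X, ∀ r : ℝ, 0 < r → r < Metric.diam X →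
        ∃ z ∈ Metric.ball x r, Metric.ball z (α * r) ∩ X = ∅ :=
  porous_of_uniformlyDisconnected_general n X C hC hud
end
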